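/- arXiv:1503.07013 — 2 statements merged into one kernel-verified Lean document; each statement's English description precedes it below -/
import Mathlib

section
/- Let π₁ : A₁ → B and π₂ : A₂ → B be morphisms of unital bialgebras with divisions, each with a section 0₁, 0₂. Let A₁⊗_B A₂ denote the sum of all subcoalgebras C of the tensor-product coalgebra A₁⊗A₂ on which the two linear maps u⊗v ↦ ε(v)π₁(u) and u⊗v ↦ ε(u)π₂(v) into B agree, and let π : A₁⊗_B A₂ → B denote their common restriction. Then: (1) the map b ↦ Σ 0₁(b₍₁₎)⊗0₂(b₍₂₎) is a coalgebra morphism B → A₁⊗_B A₂ which is a section of π; (2) F(A₁⊗_B A₂) = F(A₁)⊗F(A₂) as subspaces of A₁⊗A₂; (3) the linear map F(A₁)⊗F(A₂)⊗B → A₁⊗_B A₂ sending x⊗y⊗b to Σ x·0₁(b₍₁₎) ⊗ y·0₂(b₍₂₎) is a bijective coalgebra morphism. -/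
open TensorProduct

namespace FormalLoops

variable (k : Type*) [Field k]

/-- A unital, not necessarily associative, bialgebra with left and right divisions:
a cocommutative coassociative counital coalgebra together with a bilinear unital
multiplication and bilinear left/right divisions which are coalgebra morphisms and
satisfy the division cancellation laws (in Sweedler form). -/
structure DivBialg (A : Type*) [AddCommGroup A] [Module k A] where
  Δ : A →ₗ[k] A ⊗[k] A
  ε : A →ₗ[k] k
  mul : A →ₗ[k] A →ₗ[k] A
  one : A
  ld : A →ₗ[k] A →ₗ[k] A
  rd : A →ₗ[k] A →ₗ[k] A
  coassoc : ∀ u : A, (TensorProduct.assoc k A A A) ((Δ.rTensor A) (Δ u)) = (Δ.lTensor A) (Δ u)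
  counit_left : ∀ u : A, (TensorProduct.lid k A) ((ε.rTensor A) (Δ u)) = u
  counit_right : ∀ u : A, (TensorProduct.rid k A) ((ε.lTensor A) (Δ u)) = u
  cocomm : ∀ u : A, (TensorProduct.comm k A A) (Δ u) = Δ u
  Δ_one : Δ one = one ⊗ₜ[k] one
  ε_one : ε one = 1
  one_mul : ∀ u, mul one u = u
  mul_one : ∀ u, mul u one = u
  Δ_mul : ∀ u v, Δ (mul u v) = TensorProduct.map₂ mul mul (Δ u) (Δ v)
  ε_mul : ∀ u v, ε (mul u v) = ε u * ε v
  Δ_ld : ∀ u v, Δ (ld u v) = TensorProduct.map₂ ld ld (Δ u) (Δ v)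
  ε_ld : ∀ u v, ε (ld u v) = ε u * ε v
  Δ_rd : ∀ u v, Δ (rd u v) = TensorProduct.map₂ rd rd (Δ u) (Δ v)
  ε_rd : ∀ u v, ε (rd u v) = ε u * ε v
  /-- Σ u₍₁₎\(u₍₂₎v) = ε(u)v -/
  ld_mul_cancel : ∀ u v, TensorProduct.lift ld ((LinearMap.lTensor A (mul.flip v)) (Δ u)) = ε u • v
  /-- Σ u₍₁₎(u₍₂₎\v) = ε(u)v -/
  mul_ld_cancel : ∀ u v, TensorProduct.lift mul ((LinearMap.lTensor A (ld.flip v)) (Δ u)) = ε u • v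
  /-- Σ (vu₍₁₎)/u₍₂₎ = ε(u)v -/
  rd_mul_cancel : ∀ u v, TensorProduct.lift rd ((LinearMap.rTensor A (mul v)) (Δ u)) = ε u • v
  /-- Σ (v/u₍₁₎)u₍₂₎ = ε(u)v -/
  mul_rd_cancel : ∀ u v, TensorProduct.lift mul ((LinearMap.rTensor A (rd v)) (Δ u)) = ε u • v

variable {A B : Type*} [AddCommGroup A] [Module k A] [AddCommGroup B] [Module k B]

/-- A morphism of unital bialgebras with divisions. -/
structure DivBialgHom (SA : DivBialg k A) (SB : DivBialg k B) (π : A →ₗ[k] B) : Prop where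
  map_Δ : ∀ u, TensorProduct.map π π (SA.Δ u) = SB.Δ (π u)
  map_ε : ∀ u, SB.ε (π u) = SA.ε u
  map_mul : ∀ u v, π (SA.mul u v) = SB.mul (π u) (π v)
  map_one : π SA.one = SB.one
  map_ld : ∀ u v, π (SA.ld u v) = SB.ld (π u) (π v)
  map_rd : ∀ u v, π (SA.rd u v) = SB.rd (π u) (π v)

/-- `D` is a subcoalgebra w.r.t. the comultiplication `Δ`: `Δ(D) ⊆ D ⊗ D`. -/
def IsSubcoalg {M : Type*} [AddCommGroup M] [Module k M] (Δ : M →ₗ[k] M ⊗[k] M)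
    (D : Submodule k M) : Prop :=
  ∀ x ∈ D, Δ x ∈ LinearMap.range (TensorProduct.map D.subtype D.subtype)

/-- `F(A)`: the sum of all subcoalgebras `D ⊆ A` on which `π = ε(·) • 1`. -/
def Fsub (SA : DivBialg k A) (oneB : B) (π : A →ₗ[k] B) : Submodule k A :=
  sSup {D : Submodule k A | IsSubcoalg k SA.Δ D ∧ ∀ x ∈ D, π x = SA.ε x • oneB}

end FormalLoops

namespace FormalLoops

variable (k : Type*) [Field k]
variable {A₁ A₂ B : Type*} [AddCommGroup A₁] [Module k A₁] [AddCommGroup A₂] [Module k A₂]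
  [AddCommGroup B] [Module k B]

/-- The comultiplication of the tensor-product coalgebra `A₁ ⊗ A₂`. -/
noncomputable def tcomul (S1 : DivBialg k A₁) (S2 : DivBialg k A₂) :
    A₁ ⊗[k] A₂ →ₗ[k] (A₁ ⊗[k] A₂) ⊗[k] (A₁ ⊗[k] A₂) :=
  (TensorProduct.tensorTensorTensorComm k A₁ A₁ A₂ A₂).toLinearMap ∘ₗ
    TensorProduct.map S1.Δ S2.Δ

/-- The counit of the tensor-product coalgebra `A₁ ⊗ A₂`. -/
noncomputable def tcounit (S1 : DivBialg k A₁) (S2 : DivBialg k A₂) :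
    A₁ ⊗[k] A₂ →ₗ[k] k :=
  (TensorProduct.lid k k).toLinearMap ∘ₗ TensorProduct.map S1.ε S2.ε

/-- The linear map `A₁ ⊗ A₂ → B`, `u ⊗ v ↦ ε(v) π₁(u)`. -/
noncomputable def pbFst (S2 : DivBialg k A₂) (π₁ : A₁ →ₗ[k] B) : A₁ ⊗[k] A₂ →ₗ[k] B :=
  (TensorProduct.rid k B).toLinearMap ∘ₗ TensorProduct.map π₁ S2.ε

/-- The linear map `A₁ ⊗ A₂ → B`, `u ⊗ v ↦ ε(u) π₂(v)`. -/
noncomputable def pbSnd (S1 : DivBialg k A₁) (π₂ : A₂ →ₗ[k] B) : A₁ ⊗[k] A₂ →ₗ[k] B :=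
  (TensorProduct.lid k B).toLinearMap ∘ₗ TensorProduct.map S1.ε π₂

/-- The pullback `A₁ ⊗_B A₂`: the sum of all subcoalgebras of the tensor-product
coalgebra `A₁ ⊗ A₂` on which `u ⊗ v ↦ ε(v)π₁(u)` and `u ⊗ v ↦ ε(u)π₂(v)` agree. -/
noncomputable def pullbackSub (S1 : DivBialg k A₁) (S2 : DivBialg k A₂)
    (π₁ : A₁ →ₗ[k] B) (π₂ : A₂ →ₗ[k] B) : Submodule k (A₁ ⊗[k] A₂) :=
  sSup {C : Submodule k (A₁ ⊗[k] A₂) | IsSubcoalg k (tcomul k S1 S2) C ∧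
    ∀ t ∈ C, pbFst k S2 π₁ t = pbSnd k S1 π₂ t}

end FormalLoops

/-!
Write `r(u) = Σ u₍₁₎ / z(π(u₍₂₎))` for the fiber part of `u` (`DivBialg.fiberPart`).
Cocommutativity makes `Δ` a coalgebra map, so `r`, `b ↦ Σ z₁(b₍₁₎) ⊗ z₂(b₍₂₎)` and `Θ` are
composites of coalgebra maps. The division laws give `π ∘ r = ε(·) 1`, hence `r(A) ⊆ F(A)`, the
cancellation `r(x · z(b)) = ε(b) x` for `x ∈ F(A)`, and the decomposition
`u = Σ r(u₍₁₎) · zπ(u₍₂₎)`. By the cancellation, `t ↦ Σ (r₁ ⊗ r₂)(t₍₁₎) ⊗ π(t₍₂₎)` is a left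
inverse of `Θ`. On a subcoalgebra of `A₁ ⊗ A₂` where the two maps to `B` agree, `Δ_B ∘ π` equals
`π₁ ⊗ π₂`, and the decomposition makes that map a right inverse of `Θ` there. For (2), the
counit-weighted projections of `A₁ ⊗ A₂` onto its factors are coalgebra maps, so they carry a
subcoalgebra on which `π = ε(·) 1` into `F(A₁)` and `F(A₂)`.
-/

namespace FormalLoops

open LinearMap

variable {k : Type*} [Field k]

section Comul

variable {M N P Q M' N' : Type*} [AddCommGroup M] [Module k M] [AddCommGroup N] [Module k N]
  [AddCommGroup P] [Module k P] [AddCommGroup Q] [Module k Q]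
  [AddCommGroup M'] [Module k M'] [AddCommGroup N'] [Module k N']

noncomputable def tensorComul (ΔM : M →ₗ[k] M ⊗[k] M) (ΔN : N →ₗ[k] N ⊗[k] N) :
    M ⊗[k] N →ₗ[k] (M ⊗[k] N) ⊗[k] (M ⊗[k] N) :=
  (tensorTensorTensorComm k M M N N).toLinearMap ∘ₗ map ΔM ΔN

noncomputable def tensorCounit (εM : M →ₗ[k] k) (εN : N →ₗ[k] k) : M ⊗[k] N →ₗ[k] k :=
  (TensorProduct.lid k k).toLinearMap ∘ₗ map εM εN

noncomputable def tensorFst (εN : N →ₗ[k] k) : M ⊗[k] N →ₗ[k] M :=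
  (TensorProduct.rid k M).toLinearMap ∘ₗ lTensor M εN

noncomputable def tensorSnd (εM : M →ₗ[k] k) : M ⊗[k] N →ₗ[k] N :=
  (TensorProduct.lid k N).toLinearMap ∘ₗ rTensor N εM

@[simp]
lemma tensorComul_tmul (ΔM : M →ₗ[k] M ⊗[k] M) (ΔN : N →ₗ[k] N ⊗[k] N) (m : M) (n : N) :
    tensorComul ΔM ΔN (m ⊗ₜ n) = tensorTensorTensorComm k M M N N (ΔM m ⊗ₜ ΔN n) := rfl

@[simp]
lemma tensorCounit_tmul (εM : M →ₗ[k] k) (εN : N →ₗ[k] k) (m : M) (n : N) :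
    tensorCounit εM εN (m ⊗ₜ n) = εM m * εN n := by
  simp [tensorCounit]

@[simp]
lemma tensorFst_tmul (εN : N →ₗ[k] k) (m : M) (n : N) : tensorFst εN (m ⊗ₜ n) = εN n • m := by
  simp [tensorFst]

@[simp]
lemma tensorSnd_tmul (εM : M →ₗ[k] k) (m : M) (n : N) : tensorSnd εM (m ⊗ₜ n) = εM m • n := by
  simp [tensorSnd]

lemma tensorFst_comp_map (εN' : N' →ₗ[k] k) (f : M →ₗ[k] M') (g : N →ₗ[k] N') :
    tensorFst εN' ∘ₗ map f g = f ∘ₗ tensorFst (εN' ∘ₗ g) := by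
  ext; simp

lemma tensorSnd_comp_map (εM' : M' →ₗ[k] k) (f : M →ₗ[k] M') (g : N →ₗ[k] N') :
    tensorSnd εM' ∘ₗ map f g = g ∘ₗ tensorSnd (εM' ∘ₗ f) := by
  ext; simp

lemma tensorCounit_comp_map (εM' : M' →ₗ[k] k) (εN' : N' →ₗ[k] k) (f : M →ₗ[k] M')
    (g : N →ₗ[k] N') :
    tensorCounit εM' εN' ∘ₗ map f g = tensorCounit (εM' ∘ₗ f) (εN' ∘ₗ g) := by
  ext; simp

lemma counit_comp_tensorFst (εM : M →ₗ[k] k) (εN : N →ₗ[k] k) :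
    εM ∘ₗ tensorFst εN = tensorCounit εM εN := by
  ext; simp [mul_comm]

lemma counit_comp_tensorSnd (εM : M →ₗ[k] k) (εN : N →ₗ[k] k) :
    εN ∘ₗ tensorSnd εM = tensorCounit εM εN := by
  ext; simp

lemma map_tensorFst_comp_tensorTensorTensorComm (εP : P →ₗ[k] k) (εQ : Q →ₗ[k] k) :
    map (tensorFst εP) (tensorFst εQ) ∘ₗ (tensorTensorTensorComm k M N P Q).toLinearMap
      = tensorFst (tensorCounit εP εQ) := by
  apply ext_fourfold'
  intro m n p q
  simp [smul_tmul', tmul_smul, smul_smul, mul_comm]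

lemma map_tensorSnd_comp_tensorTensorTensorComm (εM : M →ₗ[k] k) (εN : N →ₗ[k] k) :
    map (tensorSnd εM) (tensorSnd εN) ∘ₗ (tensorTensorTensorComm k M N P Q).toLinearMap
      = tensorSnd (tensorCounit εM εN) := by
  apply ext_fourfold'
  intro m n p q
  simp [smul_tmul', tmul_smul, smul_smul, mul_comm]

lemma map_tensorFst_tensorSnd_comp_tensorTensorTensorComm (εN : N →ₗ[k] k) (εP : P →ₗ[k] k) :
    map (tensorFst εP) (tensorSnd εN) ∘ₗ (tensorTensorTensorComm k M N P Q).toLinearMap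
      = map (tensorFst εN) (tensorSnd εP) := by
  apply ext_fourfold'
  intro m n p q
  simp [smul_tmul', tmul_smul, smul_smul, mul_comm]

end Comul

section Preserves

variable {M N P Q M' N' : Type*} [AddCommGroup M] [Module k M] [AddCommGroup N] [Module k N]
  [AddCommGroup P] [Module k P] [AddCommGroup Q] [Module k Q]
  [AddCommGroup M'] [Module k M'] [AddCommGroup N'] [Module k N']
  {ΔM : M →ₗ[k] M ⊗[k] M} {ΔN : N →ₗ[k] N ⊗[k] N} {ΔP : P →ₗ[k] P ⊗[k] P}
  {ΔQ : Q →ₗ[k] Q ⊗[k] Q} {ΔM' : M' →ₗ[k] M' ⊗[k] M'} {ΔN' : N' →ₗ[k] N' ⊗[k] N'}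

def PreservesComul (ΔM : M →ₗ[k] M ⊗[k] M) (ΔN : N →ₗ[k] N ⊗[k] N) (f : M →ₗ[k] N) : Prop :=
  ΔN ∘ₗ f = map f f ∘ₗ ΔM

lemma PreservesComul.apply {f : M →ₗ[k] N} (hf : PreservesComul ΔM ΔN f) (x : M) :
    ΔN (f x) = map f f (ΔM x) :=
  LinearMap.congr_fun hf x

lemma preservesComul_id : PreservesComul ΔM ΔM LinearMap.id := by
  simp [PreservesComul]

lemma PreservesComul.comp {f : M →ₗ[k] N} {g : N →ₗ[k] P} (hg : PreservesComul ΔN ΔP g)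
    (hf : PreservesComul ΔM ΔN f) : PreservesComul ΔM ΔP (g ∘ₗ f) := by
  unfold PreservesComul at *
  rw [← comp_assoc, hg, comp_assoc, hf, ← comp_assoc, ← map_comp]

lemma PreservesComul.tensorMap {f : M →ₗ[k] M'} {g : N →ₗ[k] N'}
    (hf : PreservesComul ΔM ΔM' f) (hg : PreservesComul ΔN ΔN' g) :
    PreservesComul (tensorComul ΔM ΔN) (tensorComul ΔM' ΔN') (map f g) := by
  unfold PreservesComul tensorComul at *
  rw [comp_assoc, ← map_comp, hf, hg, map_comp, ← comp_assoc,
    tensorTensorTensorComm_comp_map, comp_assoc]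

lemma preservesComul_tensorTensorTensorComm :
    PreservesComul (tensorComul (tensorComul ΔM ΔN) (tensorComul ΔP ΔQ))
      (tensorComul (tensorComul ΔM ΔP) (tensorComul ΔN ΔQ))
      (tensorTensorTensorComm k M N P Q).toLinearMap := by
  have shuffle :
      (tensorTensorTensorComm k (M ⊗[k] P) (M ⊗[k] P) (N ⊗[k] Q) (N ⊗[k] Q)).toLinearMap ∘ₗ
          map (tensorTensorTensorComm k M M P P).toLinearMap
            (tensorTensorTensorComm k N N Q Q).toLinearMap ∘ₗ
          (tensorTensorTensorComm k (M ⊗[k] M) (N ⊗[k] N) (P ⊗[k] P) (Q ⊗[k] Q)).toLinearMap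
        = map (tensorTensorTensorComm k M N P Q).toLinearMap
            (tensorTensorTensorComm k M N P Q).toLinearMap ∘ₗ
          (tensorTensorTensorComm k (M ⊗[k] N) (M ⊗[k] N) (P ⊗[k] Q) (P ⊗[k] Q)).toLinearMap ∘ₗ
          map (tensorTensorTensorComm k M M N N).toLinearMap
            (tensorTensorTensorComm k P P Q Q).toLinearMap := by
    ext; rfl
  apply ext_fourfold'
  intro m n p q
  exact LinearMap.congr_fun shuffle ((ΔM m ⊗ₜ ΔN n) ⊗ₜ (ΔP p ⊗ₜ ΔQ q))

lemma tensorCounit_comp_tensorTensorTensorComm (εM : M →ₗ[k] k) (εN : N →ₗ[k] k)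
    (εP : P →ₗ[k] k) (εQ : Q →ₗ[k] k) :
    tensorCounit (tensorCounit εM εP) (tensorCounit εN εQ) ∘ₗ
        (tensorTensorTensorComm k M N P Q).toLinearMap
      = tensorCounit (tensorCounit εM εN) (tensorCounit εP εQ) := by
  apply ext_fourfold'
  intro m n p q
  simp only [comp_apply, LinearEquiv.coe_coe, tensorTensorTensorComm_tmul, tensorCounit_tmul]
  ring

lemma tensorCounit_comp_of_tensorFst_comp {ε : M →ₗ[k] k} (h : tensorFst ε ∘ₗ ΔM = LinearMap.id) :
    tensorCounit ε ε ∘ₗ ΔM = ε := by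
  rw [← counit_comp_tensorFst, comp_assoc, h, comp_id]

lemma preservesComul_tensorFst {εN : N →ₗ[k] k} (hN : tensorCounit εN εN ∘ₗ ΔN = εN) :
    PreservesComul (tensorComul ΔM ΔN) ΔM (tensorFst εN) := by
  unfold PreservesComul tensorComul
  rw [← comp_assoc, map_tensorFst_comp_tensorTensorTensorComm, tensorFst_comp_map, hN]

lemma preservesComul_tensorSnd {εM : M →ₗ[k] k} (hM : tensorCounit εM εM ∘ₗ ΔM = εM) :
    PreservesComul (tensorComul ΔM ΔN) ΔN (tensorSnd εM) := by
  unfold PreservesComul tensorComul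
  rw [← comp_assoc, map_tensorSnd_comp_tensorTensorTensorComm, tensorSnd_comp_map, hM]

lemma map_tensorFst_tensorSnd_comp_tensorComul {εM : M →ₗ[k] k} {εN : N →ₗ[k] k}
    (hM : tensorFst εM ∘ₗ ΔM = LinearMap.id) (hN : tensorSnd εN ∘ₗ ΔN = LinearMap.id) :
    map (tensorFst εN) (tensorSnd εM) ∘ₗ tensorComul ΔM ΔN = LinearMap.id := by
  rw [tensorComul, ← comp_assoc, map_tensorFst_tensorSnd_comp_tensorTensorTensorComm,
    ← map_comp, hM, hN, map_id]

lemma tensorFst_tensorCounit_comp_tensorComul {εM : M →ₗ[k] k} {εN : N →ₗ[k] k}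
    (hM : tensorFst εM ∘ₗ ΔM = LinearMap.id) (hN : tensorFst εN ∘ₗ ΔN = LinearMap.id) :
    tensorFst (tensorCounit εM εN) ∘ₗ tensorComul ΔM ΔN = LinearMap.id := by
  have involutive : (tensorTensorTensorComm k M N M N).toLinearMap ∘ₗ
      (tensorTensorTensorComm k M M N N).toLinearMap = LinearMap.id := by
    ext; rfl
  rw [tensorComul, ← map_tensorFst_comp_tensorTensorTensorComm, comp_assoc,
    ← comp_assoc (map ΔM ΔN), involutive, id_comp, ← map_comp, hM, hN, map_id]

end Preserves

section Subcoalg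

variable {M N M' N' : Type*} [AddCommGroup M] [Module k M] [AddCommGroup N] [Module k N]
  [AddCommGroup M'] [Module k M'] [AddCommGroup N'] [Module k N']
  {ΔM : M →ₗ[k] M ⊗[k] M} {ΔN : N →ₗ[k] N ⊗[k] N}

lemma map_mem_range_map_subtype {f : M →ₗ[k] M'} {g : N →ₗ[k] N'} {D : Submodule k M}
    {E : Submodule k N} {D' : Submodule k M'} {E' : Submodule k N'} (hf : ∀ x ∈ D, f x ∈ D')
    (hg : ∀ y ∈ E, g y ∈ E') {w : M ⊗[k] N} (hw : w ∈ range (map D.subtype E.subtype)) :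
    map f g w ∈ range (map D'.subtype E'.subtype) := by
  obtain ⟨v, rfl⟩ := hw
  refine ⟨map (f.restrict hf) (g.restrict hg) v, ?_⟩
  rw [← comp_apply, ← map_comp, subtype_comp_restrict, subtype_comp_restrict, ← comp_apply,
    ← map_comp]
  rfl

lemma map_apply_eq_of_eqOn {f : M →ₗ[k] M'} {g g' : N →ₗ[k] N'} {D : Submodule k M}
    {E : Submodule k N} (h : ∀ y ∈ E, g y = g' y) {w : M ⊗[k] N}
    (hw : w ∈ range (map D.subtype E.subtype)) : map f g w = map f g' w := by
  obtain ⟨v, rfl⟩ := hw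
  have hE : g ∘ₗ E.subtype = g' ∘ₗ E.subtype := LinearMap.ext fun y => h y y.2
  rw [← comp_apply, ← map_comp, hE, map_comp, comp_apply]

lemma isSubcoalg_sSup {S : Set (Submodule k M)} (h : ∀ D ∈ S, IsSubcoalg k ΔM D) :
    IsSubcoalg k ΔM (sSup S) := by
  intro x hx
  refine (sSup_le fun D hD y hy => ?_ :
    sSup S ≤ (range (map (sSup S).subtype (sSup S).subtype)).comap ΔM) hx
  simpa using map_mem_range_map_subtype (f := LinearMap.id) (g := LinearMap.id)
    (fun _ h => le_sSup hD h) (fun _ h => le_sSup hD h) (h D hD y hy)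

lemma IsSubcoalg.map {D : Submodule k M} (hD : IsSubcoalg k ΔM D) {f : M →ₗ[k] N}
    (hf : PreservesComul ΔM ΔN f) : IsSubcoalg k ΔN (D.map f) := by
  rintro _ ⟨x, hx, rfl⟩
  rw [hf.apply]
  exact map_mem_range_map_subtype (fun y hy => Submodule.mem_map_of_mem hy)
    (fun y hy => Submodule.mem_map_of_mem hy) (hD x hx)

lemma isSubcoalg_range {f : M →ₗ[k] N} (hf : PreservesComul ΔM ΔN f) :
    IsSubcoalg k ΔN (range f) := by
  rintro _ ⟨x, rfl⟩
  rw [hf.apply]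
  exact ⟨map f.rangeRestrict f.rangeRestrict (ΔM x), by rw [← comp_apply, ← map_comp]; rfl⟩

lemma eq_of_mem_sSup {f g : M →ₗ[k] N} {S : Set (Submodule k M)}
    (h : ∀ D ∈ S, ∀ x ∈ D, f x = g x) {x : M} (hx : x ∈ sSup S) : f x = g x :=
  (sSup_le fun D hD y hy => h D hD y hy : sSup S ≤ eqLocus f g) hx

lemma map_subtype_injective (D : Submodule k M) (E : Submodule k N) :
    Function.Injective (map D.subtype E.subtype) :=
  map_injective_of_flat_flat _ _ D.injective_subtype E.injective_subtype

noncomputable def IsSubcoalg.comul {D : Submodule k M} (hD : IsSubcoalg k ΔM D) :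
    D →ₗ[k] D ⊗[k] D :=
  (LinearEquiv.ofInjective _ (map_subtype_injective D D)).symm.toLinearMap ∘ₗ
    (ΔM ∘ₗ D.subtype).codRestrict _ fun x => hD x x.2

lemma IsSubcoalg.map_subtype_comul {D : Submodule k M} (hD : IsSubcoalg k ΔM D) (x : D) :
    TensorProduct.map D.subtype D.subtype (hD.comul x) = ΔM x := by
  simp only [IsSubcoalg.comul, comp_apply, LinearEquiv.coe_coe, LinearEquiv.ofInjective_symm_apply]
  rfl

lemma IsSubcoalg.preservesComul_subtype {D : Submodule k M} (hD : IsSubcoalg k ΔM D) :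
    PreservesComul hD.comul ΔM D.subtype :=
  LinearMap.ext fun x => (hD.map_subtype_comul x).symm

lemma IsSubcoalg.tensorFst_comp_comul {D : Submodule k M} (hD : IsSubcoalg k ΔM D)
    {ε : M →ₗ[k] k} (h : tensorFst ε ∘ₗ ΔM = LinearMap.id) :
    tensorFst (ε ∘ₗ D.subtype) ∘ₗ hD.comul = LinearMap.id := by
  ext x
  have := LinearMap.congr_fun (tensorFst_comp_map ε D.subtype D.subtype) (hD.comul x)
  simp only [comp_apply, hD.map_subtype_comul] at this
  rw [comp_apply, id_apply]
  change D.subtype _ = _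
  rw [← this]
  exact LinearMap.congr_fun h x

end Subcoalg

section Bilinear

variable {M N M' N' P Q : Type*} [AddCommGroup M] [Module k M] [AddCommGroup N] [Module k N]
  [AddCommGroup M'] [Module k M'] [AddCommGroup N'] [Module k N']
  [AddCommGroup P] [Module k P] [AddCommGroup Q] [Module k Q]

lemma map₂_apply_eq_map_lift (f : M →ₗ[k] M' →ₗ[k] P) (g : N →ₗ[k] N' →ₗ[k] Q)
    (x : M ⊗[k] N) (y : M' ⊗[k] N') :
    map₂ f g x y = map (lift f) (lift g) (tensorTensorTensorComm k M N M' N' (x ⊗ₜ y)) := by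
  have : map₂ f g = (TensorProduct.mk k _ _).compr₂
      (map (lift f) (lift g) ∘ₗ (tensorTensorTensorComm k M N M' N').toLinearMap) := by
    ext; rfl
  exact LinearMap.congr_fun₂ this x y

variable {Δ : M →ₗ[k] M ⊗[k] M} {f : M →ₗ[k] M →ₗ[k] M}

lemma preservesComul_lift (h : ∀ u v, Δ (f u v) = map₂ f f (Δ u) (Δ v)) :
    PreservesComul (tensorComul Δ Δ) Δ (lift f) := by
  apply TensorProduct.ext'
  intro u v
  simp [h, map₂_apply_eq_map_lift]

lemma counit_comp_lift {ε : M →ₗ[k] k} (h : ∀ u v, ε (f u v) = ε u * ε v) :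
    ε ∘ₗ lift f = tensorCounit ε ε := by
  ext; simp [h]

end Bilinear

namespace DivBialg

variable {A : Type*} [AddCommGroup A] [Module k A] (S : DivBialg k A)

lemma tensorFst_comp_comul : tensorFst S.ε ∘ₗ S.Δ = LinearMap.id :=
  LinearMap.ext S.counit_right

lemma tensorSnd_comp_comul : tensorSnd S.ε ∘ₗ S.Δ = LinearMap.id :=
  LinearMap.ext S.counit_left

lemma tensorCounit_comp_comul : tensorCounit S.ε S.ε ∘ₗ S.Δ = S.ε :=
  tensorCounit_comp_of_tensorFst_comp S.tensorFst_comp_comul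

abbrev toCoalgebra : Coalgebra k A where
  comul := S.Δ
  counit := S.ε
  coassoc := LinearMap.ext S.coassoc
  rTensor_counit_comp_comul := LinearMap.ext fun u =>
    (TensorProduct.lid k A).injective (by simpa using S.counit_left u)
  lTensor_counit_comp_comul := LinearMap.ext fun u =>
    (TensorProduct.rid k A).injective (by simpa using S.counit_right u)

/-- This is where cocommutativity is used. -/
lemma preservesComul_comul : PreservesComul S.Δ (tensorComul S.Δ S.Δ) S.Δ := by
  let _ := S.toCoalgebra
  have : Coalgebra.IsCocomm k A := ⟨LinearMap.ext S.cocomm⟩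
  exact (Coalgebra.comulCoalgHom k A).map_comp_comul.symm

lemma preservesComul_lift_mul : PreservesComul (tensorComul S.Δ S.Δ) S.Δ (lift S.mul) :=
  preservesComul_lift S.Δ_mul

lemma preservesComul_lift_rd : PreservesComul (tensorComul S.Δ S.Δ) S.Δ (lift S.rd) :=
  preservesComul_lift S.Δ_rd

lemma counit_comp_lift_mul : S.ε ∘ₗ lift S.mul = tensorCounit S.ε S.ε :=
  counit_comp_lift S.ε_mul

lemma counit_comp_lift_rd : S.ε ∘ₗ lift S.rd = tensorCounit S.ε S.ε :=
  counit_comp_lift S.ε_rd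

lemma lift_rd_comul (c : A) : lift S.rd (S.Δ c) = S.ε c • S.one := by
  have h := S.rd_mul_cancel c S.one
  rwa [show S.mul S.one = LinearMap.id from LinearMap.ext S.one_mul, rTensor_id, id_apply] at h

end DivBialg

namespace DivBialgHom

variable {A B : Type*} [AddCommGroup A] [Module k A] [AddCommGroup B] [Module k B]
  {SA : DivBialg k A} {SB : DivBialg k B} {π : A →ₗ[k] B}

lemma preservesComul (hπ : DivBialgHom k SA SB π) : PreservesComul SA.Δ SB.Δ π :=
  LinearMap.ext fun u => (hπ.map_Δ u).symm

lemma counit_comp (hπ : DivBialgHom k SA SB π) : SB.ε ∘ₗ π = SA.ε :=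
  LinearMap.ext hπ.map_ε

end DivBialgHom

section Fiber

variable {A B : Type*} [AddCommGroup A] [Module k A] [AddCommGroup B] [Module k B]

lemma isSubcoalg_Fsub (S : DivBialg k A) (oneB : B) (π : A →ₗ[k] B) :
    IsSubcoalg k S.Δ (Fsub k S oneB π) :=
  isSubcoalg_sSup fun _ hD => hD.1

lemma apply_of_mem_Fsub {S : DivBialg k A} {oneB : B} {π : A →ₗ[k] B} {x : A}
    (hx : x ∈ Fsub k S oneB π) : π x = S.ε x • oneB :=
  eq_of_mem_sSup (g := S.ε.smulRight oneB) (fun _ hD => hD.2) hx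

lemma le_Fsub {S : DivBialg k A} {oneB : B} {π : A →ₗ[k] B} {D : Submodule k A}
    (hD : IsSubcoalg k S.Δ D) (hπD : ∀ x ∈ D, π x = S.ε x • oneB) : D ≤ Fsub k S oneB π :=
  le_sSup ⟨hD, hπD⟩

noncomputable def DivBialg.fiberPart (S : DivBialg k A) (π : A →ₗ[k] B) (z : B →ₗ[k] A) :
    A →ₗ[k] A :=
  lift S.rd ∘ₗ lTensor A (z ∘ₗ π) ∘ₗ S.Δ

noncomputable def DivBialg.mulSection (S : DivBialg k A) (D : Submodule k A) (z : B →ₗ[k] A) :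
    D ⊗[k] B →ₗ[k] A :=
  lift S.mul ∘ₗ map D.subtype z

variable {S : DivBialg k A} {T : DivBialg k B} {π : A →ₗ[k] B} {z : B →ₗ[k] A}

@[simp]
lemma DivBialg.mulSection_tmul (D : Submodule k A) (x : D) (b : B) :
    S.mulSection D z (x ⊗ₜ b) = S.mul x (z b) :=
  rfl

lemma preservesComul_fiberPart (hπ : DivBialgHom k S T π) (hz : DivBialgHom k T S z) :
    PreservesComul S.Δ S.Δ (S.fiberPart π z) :=
  S.preservesComul_lift_rd.comp <|
    (preservesComul_id.tensorMap (hz.preservesComul.comp hπ.preservesComul)).comp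
      S.preservesComul_comul

lemma counit_comp_fiberPart (hπ : DivBialgHom k S T π) (hz : DivBialgHom k T S z) :
    S.ε ∘ₗ S.fiberPart π z = S.ε := by
  rw [DivBialg.fiberPart, ← comp_assoc, S.counit_comp_lift_rd, ← comp_assoc, lTensor,
    tensorCounit_comp_map, ← comp_assoc, hz.counit_comp, hπ.counit_comp, comp_id,
    S.tensorCounit_comp_comul]

lemma apply_fiberPart (hπ : DivBialgHom k S T π) (hsec : π ∘ₗ z = LinearMap.id) (u : A) :
    π (S.fiberPart π z u) = S.ε u • T.one := by
  have hrd : π ∘ₗ lift S.rd = lift T.rd ∘ₗ map π π := by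
    ext; simp [hπ.map_rd]
  have hzπ : map π π ∘ₗ lTensor A (z ∘ₗ π) = map π π := by
    rw [map_comp_lTensor, ← comp_assoc, hsec, id_comp]
  rw [DivBialg.fiberPart, comp_apply, comp_apply, ← comp_apply π, hrd, comp_apply,
    ← comp_apply (map π π), hzπ, hπ.map_Δ, T.lift_rd_comul, hπ.map_ε]

lemma fiberPart_mem_Fsub (hπ : DivBialgHom k S T π) (hz : DivBialgHom k T S z)
    (hsec : π ∘ₗ z = LinearMap.id) (u : A) : S.fiberPart π z u ∈ Fsub k S T.one π := by
  refine le_Fsub (isSubcoalg_range (preservesComul_fiberPart hπ hz)) ?_ ⟨u, rfl⟩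
  rintro _ ⟨v, rfl⟩
  rw [apply_fiberPart hπ hsec, ← LinearMap.congr_fun (counit_comp_fiberPart hπ hz) v, comp_apply]

lemma lift_mul_map_fiberPart (hπ : DivBialgHom k S T π) (hz : DivBialgHom k T S z) (u : A) :
    lift S.mul (map (S.fiberPart π z) (z ∘ₗ π) (S.Δ u)) = u := by
  set ρ : A →ₗ[k] A := z ∘ₗ π
  have hρ : PreservesComul S.Δ S.Δ ρ := hz.preservesComul.comp hπ.preservesComul
  have hερ : S.ε ∘ₗ ρ = S.ε := by rw [← comp_assoc, hz.counit_comp, hπ.counit_comp]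
  set g : A ⊗[k] (A ⊗[k] A) →ₗ[k] A :=
    lift S.mul ∘ₗ map (lift S.rd ∘ₗ lTensor A ρ) ρ ∘ₗ (TensorProduct.assoc k A A A).symm.toLinearMap
  -- `Σ (a / ρ(w₍₁₎)) · ρ(w₍₂₎) = ε(w) a` is the cancellation law `mul_rd_cancel` for `ρ w`.
  have hg : g ∘ₗ lTensor A S.Δ = tensorFst S.ε := by
    apply TensorProduct.ext'
    intro a w
    have hw : ∀ s : A ⊗[k] A, g (a ⊗ₜ s) = lift S.mul (rTensor A (S.rd a) (map ρ ρ s)) := by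
      intro s
      induction s using TensorProduct.induction_on with
      | zero => simp
      | tmul b c => simp [g]
      | add p q hp hq => simp only [tmul_add, map_add, hp, hq]
    rw [comp_apply, lTensor_tmul, hw, ← hρ.apply, S.mul_rd_cancel, tensorFst_tmul,
      ← LinearMap.congr_fun hερ w]
    rfl
  have hmap : map (S.fiberPart π z) ρ = map (lift S.rd ∘ₗ lTensor A ρ) ρ ∘ₗ rTensor A S.Δ := by
    rw [map_comp_rTensor]; rfl
  have hcoassoc : rTensor A S.Δ (S.Δ u)
      = (TensorProduct.assoc k A A A).symm (lTensor A S.Δ (S.Δ u)) := by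
    rw [← S.coassoc u, LinearEquiv.symm_apply_apply]
  rw [hmap, comp_apply, hcoassoc]
  exact (LinearMap.congr_fun hg (S.Δ u)).trans (S.counit_right u)

variable {D : Submodule k A}

lemma preservesComul_mulSection (hD : IsSubcoalg k S.Δ D) (hz : DivBialgHom k T S z) :
    PreservesComul (tensorComul hD.comul T.Δ) S.Δ (S.mulSection D z) :=
  S.preservesComul_lift_mul.comp (hD.preservesComul_subtype.tensorMap hz.preservesComul)

lemma counit_comp_mulSection (hz : DivBialgHom k T S z) :
    S.ε ∘ₗ S.mulSection D z = tensorCounit (S.ε ∘ₗ D.subtype) T.ε := by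
  rw [DivBialg.mulSection, ← comp_assoc, S.counit_comp_lift_mul, tensorCounit_comp_map,
    hz.counit_comp]

lemma comp_mulSection (hπ : DivBialgHom k S T π) (hsec : π ∘ₗ z = LinearMap.id)
    (hπD : ∀ x ∈ D, π x = S.ε x • T.one) :
    π ∘ₗ S.mulSection D z = tensorSnd (S.ε ∘ₗ D.subtype) := by
  apply TensorProduct.ext'
  intro x b
  have hb : π (z b) = b := LinearMap.congr_fun hsec b
  simp [hπ.map_mul, hπD x x.2, T.one_mul, hb]

lemma fiberPart_comp_mulSection (hπ : DivBialgHom k S T π) (hz : DivBialgHom k T S z)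
    (hsec : π ∘ₗ z = LinearMap.id) (hD : IsSubcoalg k S.Δ D)
    (hπD : ∀ x ∈ D, π x = S.ε x • T.one) :
    S.fiberPart π z ∘ₗ S.mulSection D z = D.subtype ∘ₗ tensorFst T.ε := by
  set H : D ⊗[k] (B ⊗[k] B) →ₗ[k] A :=
    lift S.rd ∘ₗ map (S.mulSection D z) z ∘ₗ (TensorProduct.assoc k D B B).symm.toLinearMap
  have hshuffle : lift S.rd ∘ₗ map (S.mulSection D z) (z ∘ₗ tensorSnd (S.ε ∘ₗ D.subtype)) ∘ₗ
        (tensorTensorTensorComm k D D B B).toLinearMap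
      = H ∘ₗ rTensor (B ⊗[k] B) (tensorFst (S.ε ∘ₗ D.subtype)) := by
    apply ext_fourfold'
    intro x₁ x₂ b₁ b₂
    simp [H]
  have hH : ∀ (x : D) (b : B), H (x ⊗ₜ T.Δ b) = T.ε b • (x : A) := by
    intro x b
    have hx : ∀ c : B ⊗[k] B, H (x ⊗ₜ c) = lift S.rd (rTensor A (S.mul x) (map z z c)) := by
      intro c
      induction c using TensorProduct.induction_on with
      | zero => simp
      | tmul b₁ b₂ => simp [H]
      | add p q hp hq => simp only [tmul_add, map_add, hp, hq]
    rw [hx, hz.map_Δ, S.rd_mul_cancel, hz.map_ε]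
  apply TensorProduct.ext'
  intro x b
  calc S.fiberPart π z (S.mulSection D z (x ⊗ₜ b))
      = lift S.rd (map (S.mulSection D z) (z ∘ₗ tensorSnd (S.ε ∘ₗ D.subtype))
          (tensorTensorTensorComm k D D B B (hD.comul x ⊗ₜ T.Δ b))) := by
        rw [DivBialg.fiberPart, comp_apply, comp_apply, (preservesComul_mulSection hD hz).apply,
          lTensor_map, comp_assoc, comp_mulSection hπ hsec hπD]
        rfl
    _ = H (tensorFst (S.ε ∘ₗ D.subtype) (hD.comul x) ⊗ₜ T.Δ b) :=
        LinearMap.congr_fun hshuffle (hD.comul x ⊗ₜ T.Δ b)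
    _ = T.ε b • (x : A) := by
        rw [← comp_apply (tensorFst _), hD.tensorFst_comp_comul S.tensorFst_comp_comul, id_apply,
          hH]
    _ = (D.subtype ∘ₗ tensorFst T.ε) (x ⊗ₜ b) := by simp

variable (hπ : DivBialgHom k S T π) (hz : DivBialgHom k T S z) (hsec : π ∘ₗ z = LinearMap.id)

noncomputable def fiberRetraction : A →ₗ[k] Fsub k S T.one π :=
  (S.fiberPart π z).codRestrict _ (fiberPart_mem_Fsub hπ hz hsec)

lemma fiberRetraction_comp_mulSection :
    fiberRetraction hπ hz hsec ∘ₗ S.mulSection (Fsub k S T.one π) z = tensorFst T.ε := by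
  apply TensorProduct.ext'
  intro x b
  apply Subtype.ext
  exact LinearMap.congr_fun (fiberPart_comp_mulSection hπ hz hsec (isSubcoalg_Fsub S T.one π)
    fun _ => apply_of_mem_Fsub) (x ⊗ₜ b)

lemma mulSection_comp_map_fiberRetraction :
    S.mulSection (Fsub k S T.one π) z ∘ₗ map (fiberRetraction hπ hz hsec) π ∘ₗ S.Δ
      = LinearMap.id := by
  rw [DivBialg.mulSection, comp_assoc, ← comp_assoc S.Δ, ← map_comp]
  ext u
  exact lift_mul_map_fiberPart hπ hz u

end Fiber

section Pullback

variable {M A₁ A₂ B : Type*} [AddCommGroup M] [Module k M] [AddCommGroup A₁] [Module k A₁]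
  [AddCommGroup A₂] [Module k A₂] [AddCommGroup B] [Module k B]
  {S1 : DivBialg k A₁} {S2 : DivBialg k A₂} {SB : DivBialg k B}
  {π₁ : A₁ →ₗ[k] B} {π₂ : A₂ →ₗ[k] B} {z₁ : B →ₗ[k] A₁} {z₂ : B →ₗ[k] A₂}

lemma tcomul_eq : tcomul k S1 S2 = tensorComul S1.Δ S2.Δ := rfl

lemma tcounit_eq : tcounit k S1 S2 = tensorCounit S1.ε S2.ε := rfl

lemma pbFst_eq : pbFst k S2 π₁ = π₁ ∘ₗ tensorFst S2.ε := by
  ext; simp [pbFst]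

lemma pbSnd_eq : pbSnd k S1 π₂ = π₂ ∘ₗ tensorSnd S1.ε := by
  ext; simp [pbSnd]

lemma preservesComul_pbFst (hπ₁ : DivBialgHom k S1 SB π₁) :
    PreservesComul (tcomul k S1 S2) SB.Δ (pbFst k S2 π₁) := by
  rw [pbFst_eq]
  exact hπ₁.preservesComul.comp (preservesComul_tensorFst S2.tensorCounit_comp_comul)

lemma map_pbFst_pbSnd_comp_tcomul :
    map (pbFst k S2 π₁) (pbSnd k S1 π₂) ∘ₗ tcomul k S1 S2 = map π₁ π₂ := by
  rw [pbFst_eq, pbSnd_eq, map_comp, comp_assoc, tcomul_eq,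
    map_tensorFst_tensorSnd_comp_tensorComul S1.tensorFst_comp_comul S2.tensorSnd_comp_comul,
    comp_id]

lemma range_le_pullbackSub {ΔM : M →ₗ[k] M ⊗[k] M} {f : M →ₗ[k] A₁ ⊗[k] A₂}
    (hf : PreservesComul ΔM (tcomul k S1 S2) f) (h : pbFst k S2 π₁ ∘ₗ f = pbSnd k S1 π₂ ∘ₗ f) :
    range f ≤ pullbackSub k S1 S2 π₁ π₂ := by
  refine le_sSup ⟨isSubcoalg_range hf, ?_⟩
  rintro _ ⟨x, rfl⟩
  exact LinearMap.congr_fun h x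

lemma preservesComul_sigma (hz₁ : DivBialgHom k SB S1 z₁) (hz₂ : DivBialgHom k SB S2 z₂) :
    PreservesComul SB.Δ (tcomul k S1 S2) (map z₁ z₂ ∘ₗ SB.Δ) :=
  (hz₁.preservesComul.tensorMap hz₂.preservesComul).comp SB.preservesComul_comul

lemma tcounit_comp_sigma (hz₁ : DivBialgHom k SB S1 z₁) (hz₂ : DivBialgHom k SB S2 z₂) :
    tcounit k S1 S2 ∘ₗ map z₁ z₂ ∘ₗ SB.Δ = SB.ε := by
  rw [tcounit_eq, ← comp_assoc, tensorCounit_comp_map, hz₁.counit_comp, hz₂.counit_comp,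
    SB.tensorCounit_comp_comul]

lemma pbFst_comp_sigma (hz₂ : DivBialgHom k SB S2 z₂) (hsec₁ : π₁ ∘ₗ z₁ = LinearMap.id) :
    pbFst k S2 π₁ ∘ₗ map z₁ z₂ ∘ₗ SB.Δ = LinearMap.id := by
  rw [pbFst_eq, comp_assoc, ← comp_assoc SB.Δ, tensorFst_comp_map, hz₂.counit_comp, comp_assoc,
    SB.tensorFst_comp_comul, comp_id, hsec₁]

lemma pbSnd_comp_sigma (hz₁ : DivBialgHom k SB S1 z₁) (hsec₂ : π₂ ∘ₗ z₂ = LinearMap.id) :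
    pbSnd k S1 π₂ ∘ₗ map z₁ z₂ ∘ₗ SB.Δ = LinearMap.id := by
  rw [pbSnd_eq, comp_assoc, ← comp_assoc SB.Δ, tensorSnd_comp_map, hz₁.counit_comp, comp_assoc,
    SB.tensorSnd_comp_comul, comp_id, hsec₂]

theorem sSup_fiber_tensor_eq_range (S1 : DivBialg k A₁) (S2 : DivBialg k A₂) (oneB : B)
    (π₁ : A₁ →ₗ[k] B) (π₂ : A₂ →ₗ[k] B) :
    sSup {D : Submodule k (A₁ ⊗[k] A₂) | IsSubcoalg k (tcomul k S1 S2) D ∧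
        ∀ t ∈ D, pbFst k S2 π₁ t = tcounit k S1 S2 t • oneB ∧
                 pbSnd k S1 π₂ t = tcounit k S1 S2 t • oneB}
      = range (map (Fsub k S1 oneB π₁).subtype (Fsub k S2 oneB π₂).subtype) := by
  apply le_antisymm
  · refine sSup_le fun D ⟨hD, hDπ⟩ t ht => ?_
    have h₁ : D.map (tensorFst S2.ε) ≤ Fsub k S1 oneB π₁ := by
      refine le_Fsub (hD.map (preservesComul_tensorFst S2.tensorCounit_comp_comul)) ?_
      rintro _ ⟨t', ht', rfl⟩
      rw [← comp_apply π₁, ← pbFst_eq, (hDπ t' ht').1, ← comp_apply S1.ε, counit_comp_tensorFst]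
      rfl
    have h₂ : D.map (tensorSnd S1.ε) ≤ Fsub k S2 oneB π₂ := by
      refine le_Fsub (hD.map (preservesComul_tensorSnd S1.tensorCounit_comp_comul)) ?_
      rintro _ ⟨t', ht', rfl⟩
      rw [← comp_apply π₂, ← pbSnd_eq, (hDπ t' ht').2, ← comp_apply S2.ε, counit_comp_tensorSnd]
      rfl
    rw [← LinearMap.id_apply (R := k) t, ← map_tensorFst_tensorSnd_comp_tensorComul
      S1.tensorFst_comp_comul S2.tensorSnd_comp_comul, comp_apply]
    exact map_mem_range_map_subtype (fun x hx => h₁ ⟨x, hx, rfl⟩) (fun y hy => h₂ ⟨y, hy, rfl⟩)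
      (hD t ht)
  · refine le_sSup ⟨isSubcoalg_range ((isSubcoalg_Fsub S1 oneB π₁).preservesComul_subtype.tensorMap
      (isSubcoalg_Fsub S2 oneB π₂).preservesComul_subtype), ?_⟩
    rintro _ ⟨s, rfl⟩
    induction s using TensorProduct.induction_on with
    | zero => simp
    | tmul x y =>
      simp [pbFst, pbSnd, tcounit_eq, apply_of_mem_Fsub x.2, apply_of_mem_Fsub y.2, smul_smul,
        mul_comm]
    | add p q hp hq => simp [hp.1, hq.1, hp.2, hq.2, add_smul]

noncomputable def factorization (S1 : DivBialg k A₁) (S2 : DivBialg k A₂) (SB : DivBialg k B)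
    (D₁ : Submodule k A₁) (D₂ : Submodule k A₂) (z₁ : B →ₗ[k] A₁) (z₂ : B →ₗ[k] A₂) :
    (D₁ ⊗[k] D₂) ⊗[k] B →ₗ[k] A₁ ⊗[k] A₂ :=
  map (S1.mulSection D₁ z₁) (S2.mulSection D₂ z₂) ∘ₗ
    (tensorTensorTensorComm k D₁ D₂ B B).toLinearMap ∘ₗ lTensor (D₁ ⊗[k] D₂) SB.Δ

variable {D₁ : Submodule k A₁} {D₂ : Submodule k A₂}

lemma preservesComul_factorization (hD₁ : IsSubcoalg k S1.Δ D₁) (hD₂ : IsSubcoalg k S2.Δ D₂)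
    (hz₁ : DivBialgHom k SB S1 z₁) (hz₂ : DivBialgHom k SB S2 z₂) :
    PreservesComul (tensorComul (tensorComul hD₁.comul hD₂.comul) SB.Δ) (tcomul k S1 S2)
      (factorization S1 S2 SB D₁ D₂ z₁ z₂) :=
  ((preservesComul_mulSection hD₁ hz₁).tensorMap (preservesComul_mulSection hD₂ hz₂)).comp <|
    preservesComul_tensorTensorTensorComm.comp (preservesComul_id.tensorMap SB.preservesComul_comul)

lemma tcounit_comp_factorization (hz₁ : DivBialgHom k SB S1 z₁) (hz₂ : DivBialgHom k SB S2 z₂) :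
    tcounit k S1 S2 ∘ₗ factorization S1 S2 SB D₁ D₂ z₁ z₂
      = tensorCounit (tensorCounit (S1.ε ∘ₗ D₁.subtype) (S2.ε ∘ₗ D₂.subtype)) SB.ε := by
  rw [tcounit_eq, factorization, ← comp_assoc, tensorCounit_comp_map, counit_comp_mulSection hz₁,
    counit_comp_mulSection hz₂, ← comp_assoc, tensorCounit_comp_tensorTensorTensorComm, lTensor,
    tensorCounit_comp_map, comp_id, SB.tensorCounit_comp_comul]

lemma pbFst_comp_factorization (hπ₁ : DivBialgHom k S1 SB π₁) (hz₂ : DivBialgHom k SB S2 z₂)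
    (hsec₁ : π₁ ∘ₗ z₁ = LinearMap.id) (hπD₁ : ∀ x ∈ D₁, π₁ x = S1.ε x • SB.one) :
    pbFst k S2 π₁ ∘ₗ factorization S1 S2 SB D₁ D₂ z₁ z₂
      = tensorSnd (tensorCounit (S1.ε ∘ₗ D₁.subtype) (S2.ε ∘ₗ D₂.subtype)) := by
  have hshuffle : tensorSnd (S1.ε ∘ₗ D₁.subtype) ∘ₗ
        tensorFst (tensorCounit (S2.ε ∘ₗ D₂.subtype) SB.ε) ∘ₗ
        (tensorTensorTensorComm k D₁ D₂ B B).toLinearMap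
      = tensorSnd (tensorCounit (S1.ε ∘ₗ D₁.subtype) (S2.ε ∘ₗ D₂.subtype)) ∘ₗ
        lTensor _ (tensorFst SB.ε) := by
    apply ext_fourfold'
    intro x y b₁ b₂
    simp only [comp_apply, LinearEquiv.coe_coe, tensorTensorTensorComm_tmul, tensorFst_tmul,
      tensorSnd_tmul, lTensor_tmul, tensorCounit_tmul, map_smul, smul_smul, Submodule.coe_subtype]
    ring_nf
  calc pbFst k S2 π₁ ∘ₗ factorization S1 S2 SB D₁ D₂ z₁ z₂
      = π₁ ∘ₗ S1.mulSection D₁ z₁ ∘ₗ tensorFst (S2.ε ∘ₗ S2.mulSection D₂ z₂) ∘ₗ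
          (tensorTensorTensorComm k D₁ D₂ B B).toLinearMap ∘ₗ lTensor _ SB.Δ := by
        rw [pbFst_eq, factorization, comp_assoc, ← comp_assoc _ (map _ _), tensorFst_comp_map]
        simp only [comp_assoc]
    _ = tensorSnd (S1.ε ∘ₗ D₁.subtype) ∘ₗ tensorFst (tensorCounit (S2.ε ∘ₗ D₂.subtype) SB.ε) ∘ₗ
          (tensorTensorTensorComm k D₁ D₂ B B).toLinearMap ∘ₗ lTensor _ SB.Δ := by
        rw [← comp_assoc _ _ π₁, comp_mulSection hπ₁ hsec₁ hπD₁, counit_comp_mulSection hz₂]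
    _ = tensorSnd (tensorCounit (S1.ε ∘ₗ D₁.subtype) (S2.ε ∘ₗ D₂.subtype)) := by
        rw [← comp_assoc (lTensor _ SB.Δ), ← comp_assoc _ _ (tensorSnd _), hshuffle, comp_assoc,
          ← lTensor_comp, SB.tensorFst_comp_comul, lTensor_id, comp_id]

lemma pbSnd_comp_factorization (hπ₂ : DivBialgHom k S2 SB π₂) (hz₁ : DivBialgHom k SB S1 z₁)
    (hsec₂ : π₂ ∘ₗ z₂ = LinearMap.id) (hπD₂ : ∀ x ∈ D₂, π₂ x = S2.ε x • SB.one) :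
    pbSnd k S1 π₂ ∘ₗ factorization S1 S2 SB D₁ D₂ z₁ z₂
      = tensorSnd (tensorCounit (S1.ε ∘ₗ D₁.subtype) (S2.ε ∘ₗ D₂.subtype)) := by
  have hshuffle : tensorSnd (S2.ε ∘ₗ D₂.subtype) ∘ₗ
        tensorSnd (tensorCounit (S1.ε ∘ₗ D₁.subtype) SB.ε) ∘ₗ
        (tensorTensorTensorComm k D₁ D₂ B B).toLinearMap
      = tensorSnd (tensorCounit (S1.ε ∘ₗ D₁.subtype) (S2.ε ∘ₗ D₂.subtype)) ∘ₗ
        lTensor _ (tensorSnd SB.ε) := by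
    apply ext_fourfold'
    intro x y b₁ b₂
    simp only [comp_apply, LinearEquiv.coe_coe, tensorTensorTensorComm_tmul, tensorSnd_tmul,
      lTensor_tmul, tensorCounit_tmul, map_smul, smul_smul, Submodule.coe_subtype]
    ring_nf
  calc pbSnd k S1 π₂ ∘ₗ factorization S1 S2 SB D₁ D₂ z₁ z₂
      = π₂ ∘ₗ S2.mulSection D₂ z₂ ∘ₗ tensorSnd (S1.ε ∘ₗ S1.mulSection D₁ z₁) ∘ₗ
          (tensorTensorTensorComm k D₁ D₂ B B).toLinearMap ∘ₗ lTensor _ SB.Δ := by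
        rw [pbSnd_eq, factorization, comp_assoc, ← comp_assoc _ (map _ _), tensorSnd_comp_map]
        simp only [comp_assoc]
    _ = tensorSnd (S2.ε ∘ₗ D₂.subtype) ∘ₗ tensorSnd (tensorCounit (S1.ε ∘ₗ D₁.subtype) SB.ε) ∘ₗ
          (tensorTensorTensorComm k D₁ D₂ B B).toLinearMap ∘ₗ lTensor _ SB.Δ := by
        rw [← comp_assoc _ _ π₂, comp_mulSection hπ₂ hsec₂ hπD₂, counit_comp_mulSection hz₁]
    _ = tensorSnd (tensorCounit (S1.ε ∘ₗ D₁.subtype) (S2.ε ∘ₗ D₂.subtype)) := by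
        rw [← comp_assoc (lTensor _ SB.Δ), ← comp_assoc _ _ (tensorSnd _), hshuffle, comp_assoc,
          ← lTensor_comp, SB.tensorSnd_comp_comul, lTensor_id, comp_id]

lemma range_sigma_le_pullbackSub (hz₁ : DivBialgHom k SB S1 z₁) (hz₂ : DivBialgHom k SB S2 z₂)
    (hsec₁ : π₁ ∘ₗ z₁ = LinearMap.id) (hsec₂ : π₂ ∘ₗ z₂ = LinearMap.id) :
    range (map z₁ z₂ ∘ₗ SB.Δ) ≤ pullbackSub k S1 S2 π₁ π₂ :=
  range_le_pullbackSub (preservesComul_sigma hz₁ hz₂)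
    ((pbFst_comp_sigma hz₂ hsec₁).trans (pbSnd_comp_sigma hz₁ hsec₂).symm)

noncomputable def factorizationInv
    (hπ₁ : DivBialgHom k S1 SB π₁) (hz₁ : DivBialgHom k SB S1 z₁)
    (hsec₁ : π₁ ∘ₗ z₁ = LinearMap.id) (hπ₂ : DivBialgHom k S2 SB π₂)
    (hz₂ : DivBialgHom k SB S2 z₂) (hsec₂ : π₂ ∘ₗ z₂ = LinearMap.id) :
    A₁ ⊗[k] A₂ →ₗ[k] (Fsub k S1 SB.one π₁ ⊗[k] Fsub k S2 SB.one π₂) ⊗[k] B :=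
  map (map (fiberRetraction hπ₁ hz₁ hsec₁) (fiberRetraction hπ₂ hz₂ hsec₂)) (pbFst k S2 π₁) ∘ₗ
    tcomul k S1 S2

lemma factorizationInv_comp_factorization
    (hπ₁ : DivBialgHom k S1 SB π₁) (hz₁ : DivBialgHom k SB S1 z₁)
    (hsec₁ : π₁ ∘ₗ z₁ = LinearMap.id) (hπ₂ : DivBialgHom k S2 SB π₂)
    (hz₂ : DivBialgHom k SB S2 z₂) (hsec₂ : π₂ ∘ₗ z₂ = LinearMap.id) :
    factorizationInv hπ₁ hz₁ hsec₁ hπ₂ hz₂ hsec₂ ∘ₗ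
      factorization S1 S2 SB (Fsub k S1 SB.one π₁) (Fsub k S2 SB.one π₂) z₁ z₂ = LinearMap.id := by
  have hF₁ := isSubcoalg_Fsub S1 SB.one π₁
  have hF₂ := isSubcoalg_Fsub S2 SB.one π₂
  have hfst : map (fiberRetraction hπ₁ hz₁ hsec₁) (fiberRetraction hπ₂ hz₂ hsec₂) ∘ₗ
      factorization S1 S2 SB (Fsub k S1 SB.one π₁) (Fsub k S2 SB.one π₂) z₁ z₂
        = tensorFst SB.ε := by
    rw [factorization, ← comp_assoc, ← map_comp, fiberRetraction_comp_mulSection,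
      fiberRetraction_comp_mulSection, ← comp_assoc, map_tensorFst_comp_tensorTensorTensorComm,
      lTensor, tensorFst_comp_map, SB.tensorCounit_comp_comul, id_comp]
  have hcounit := tensorFst_tensorCounit_comp_tensorComul
    (hF₁.tensorFst_comp_comul S1.tensorFst_comp_comul)
    (hF₂.tensorFst_comp_comul S2.tensorFst_comp_comul)
  rw [factorizationInv, comp_assoc, preservesComul_factorization hF₁ hF₂ hz₁ hz₂, ← comp_assoc,
    ← map_comp, hfst, pbFst_comp_factorization hπ₁ hz₂ hsec₁ fun _ => apply_of_mem_Fsub,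
    map_tensorFst_tensorSnd_comp_tensorComul hcounit SB.tensorSnd_comp_comul]

lemma tensor_mulSection_decomposition
    (hπ₁ : DivBialgHom k S1 SB π₁) (hz₁ : DivBialgHom k SB S1 z₁)
    (hsec₁ : π₁ ∘ₗ z₁ = LinearMap.id) (hπ₂ : DivBialgHom k S2 SB π₂)
    (hz₂ : DivBialgHom k SB S2 z₂) (hsec₂ : π₂ ∘ₗ z₂ = LinearMap.id) :
    map (S1.mulSection (Fsub k S1 SB.one π₁) z₁) (S2.mulSection (Fsub k S2 SB.one π₂) z₂) ∘ₗ
      (tensorTensorTensorComm k (Fsub k S1 SB.one π₁) (Fsub k S2 SB.one π₂) B B).toLinearMap ∘ₗ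
      map (map (fiberRetraction hπ₁ hz₁ hsec₁) (fiberRetraction hπ₂ hz₂ hsec₂)) (map π₁ π₂) ∘ₗ
      tcomul k S1 S2 = LinearMap.id := by
  have hinv : (tensorTensorTensorComm k (Fsub k S1 SB.one π₁) (Fsub k S2 SB.one π₂) B B
      ).toLinearMap ∘ₗ
        (tensorTensorTensorComm k (Fsub k S1 SB.one π₁) B (Fsub k S2 SB.one π₂) B).toLinearMap
        = LinearMap.id := by
    ext; rfl
  rw [tcomul_eq, tensorComul, ← comp_assoc (map S1.Δ S2.Δ), ← tensorTensorTensorComm_comp_map,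
    comp_assoc, ← comp_assoc _ _ (tensorTensorTensorComm _ _ _ _ _).toLinearMap, hinv, id_comp,
    ← map_comp, ← map_comp, mulSection_comp_map_fiberRetraction,
    mulSection_comp_map_fiberRetraction, map_id]

lemma factorization_factorizationInv_of_mem
    (hπ₁ : DivBialgHom k S1 SB π₁) (hz₁ : DivBialgHom k SB S1 z₁)
    (hsec₁ : π₁ ∘ₗ z₁ = LinearMap.id) (hπ₂ : DivBialgHom k S2 SB π₂)
    (hz₂ : DivBialgHom k SB S2 z₂) (hsec₂ : π₂ ∘ₗ z₂ = LinearMap.id)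
    {C : Submodule k (A₁ ⊗[k] A₂)} (hC : IsSubcoalg k (tcomul k S1 S2) C)
    (hCπ : ∀ t ∈ C, pbFst k S2 π₁ t = pbSnd k S1 π₂ t)
    {t : A₁ ⊗[k] A₂} (ht : t ∈ C) :
    factorization S1 S2 SB (Fsub k S1 SB.one π₁) (Fsub k S2 SB.one π₂) z₁ z₂
      (factorizationInv hπ₁ hz₁ hsec₁ hπ₂ hz₂ hsec₂ t) = t := by
  set r₁ := fiberRetraction hπ₁ hz₁ hsec₁
  set r₂ := fiberRetraction hπ₂ hz₂ hsec₂
  have hbase : ∀ y ∈ C, SB.Δ (pbFst k S2 π₁ y) = map π₁ π₂ y := by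
    intro y hy
    rw [(preservesComul_pbFst hπ₁).apply, map_apply_eq_of_eqOn hCπ (hC y hy), ← comp_apply,
      map_pbFst_pbSnd_comp_tcomul]
  calc factorization S1 S2 SB (Fsub k S1 SB.one π₁) (Fsub k S2 SB.one π₂) z₁ z₂
        (factorizationInv hπ₁ hz₁ hsec₁ hπ₂ hz₂ hsec₂ t)
      = map (S1.mulSection (Fsub k S1 SB.one π₁) z₁) (S2.mulSection (Fsub k S2 SB.one π₂) z₂)
          (tensorTensorTensorComm k (Fsub k S1 SB.one π₁) (Fsub k S2 SB.one π₂) B B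
            (map (map r₁ r₂) (SB.Δ ∘ₗ pbFst k S2 π₁) (tcomul k S1 S2 t))) := by
        simp only [factorization, factorizationInv, comp_apply, lTensor_map]
        rfl
    _ = t := by
        rw [map_apply_eq_of_eqOn hbase (hC t ht)]
        exact LinearMap.congr_fun (tensor_mulSection_decomposition hπ₁ hz₁ hsec₁ hπ₂ hz₂ hsec₂) t

theorem range_factorization
    (hπ₁ : DivBialgHom k S1 SB π₁) (hz₁ : DivBialgHom k SB S1 z₁)
    (hsec₁ : π₁ ∘ₗ z₁ = LinearMap.id) (hπ₂ : DivBialgHom k S2 SB π₂)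
    (hz₂ : DivBialgHom k SB S2 z₂) (hsec₂ : π₂ ∘ₗ z₂ = LinearMap.id) :
    range (factorization S1 S2 SB (Fsub k S1 SB.one π₁) (Fsub k S2 SB.one π₂) z₁ z₂)
      = pullbackSub k S1 S2 π₁ π₂ := by
  apply le_antisymm
  · exact range_le_pullbackSub
      (preservesComul_factorization (isSubcoalg_Fsub _ _ _) (isSubcoalg_Fsub _ _ _) hz₁ hz₂)
      ((pbFst_comp_factorization hπ₁ hz₂ hsec₁ fun _ => apply_of_mem_Fsub).trans
        (pbSnd_comp_factorization hπ₂ hz₁ hsec₂ fun _ => apply_of_mem_Fsub).symm)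
  · intro t ht
    exact ⟨_, eq_of_mem_sSup (f := factorization S1 S2 SB _ _ z₁ z₂ ∘ₗ
      factorizationInv hπ₁ hz₁ hsec₁ hπ₂ hz₂ hsec₂) (g := LinearMap.id) (fun C hC _ ht =>
      factorization_factorizationInv_of_mem hπ₁ hz₁ hsec₁ hπ₂ hz₂ hsec₂ hC.1 hC.2 ht) ht⟩

theorem factorization_injective
    (hπ₁ : DivBialgHom k S1 SB π₁) (hz₁ : DivBialgHom k SB S1 z₁)
    (hsec₁ : π₁ ∘ₗ z₁ = LinearMap.id) (hπ₂ : DivBialgHom k S2 SB π₂)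
    (hz₂ : DivBialgHom k SB S2 z₂) (hsec₂ : π₂ ∘ₗ z₂ = LinearMap.id) :
    Function.Injective
      (factorization S1 S2 SB (Fsub k S1 SB.one π₁) (Fsub k S2 SB.one π₂) z₁ z₂) :=
  Function.LeftInverse.injective (g := factorizationInv hπ₁ hz₁ hsec₁ hπ₂ hz₂ hsec₂)
    (LinearMap.congr_fun (factorizationInv_comp_factorization hπ₁ hz₁ hsec₁ hπ₂ hz₂ hsec₂))

end Pullback

end FormalLoops

open FormalLoops in
theorem pullback_section_and_factorization_general
    (k : Type*) [Field k]
    {A₁ A₂ B : Type*} [AddCommGroup A₁] [Module k A₁] [AddCommGroup A₂] [Module k A₂]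
    [AddCommGroup B] [Module k B]
    (S1 : DivBialg k A₁) (S2 : DivBialg k A₂) (SB : DivBialg k B)
    (π₁ : A₁ →ₗ[k] B) (π₂ : A₂ →ₗ[k] B) (z₁ : B →ₗ[k] A₁) (z₂ : B →ₗ[k] A₂)
    (hπ₁ : DivBialgHom k S1 SB π₁) (hπ₂ : DivBialgHom k S2 SB π₂)
    (hz₁ : DivBialgHom k SB S1 z₁) (hz₂ : DivBialgHom k SB S2 z₂)
    (hsec₁ : π₁ ∘ₗ z₁ = LinearMap.id) (hsec₂ : π₂ ∘ₗ z₂ = LinearMap.id)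
    -- abbreviations
    (F₁ : Submodule k A₁) (hF₁ : F₁ = Fsub k S1 SB.one π₁)
    (F₂ : Submodule k A₂) (hF₂ : F₂ = Fsub k S2 SB.one π₂)
    (pb : Submodule k (A₁ ⊗[k] A₂)) (hpb : pb = pullbackSub k S1 S2 π₁ π₂)
    -- the section σ : B → A₁ ⊗ A₂, b ↦ Σ z₁(b₍₁₎) ⊗ z₂(b₍₂₎)
    (σ : B →ₗ[k] A₁ ⊗[k] A₂) (hσ : σ = TensorProduct.map z₁ z₂ ∘ₗ SB.Δ)
    -- the map Θ : (F₁ ⊗ F₂) ⊗ B → A₁ ⊗ A₂, (x ⊗ y) ⊗ b ↦ Σ x·z₁(b₍₁₎) ⊗ y·z₂(b₍₂₎)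
    (Θ : (F₁ ⊗[k] F₂) ⊗[k] B →ₗ[k] A₁ ⊗[k] A₂)
    (hΘ : Θ = TensorProduct.map
            (TensorProduct.lift S1.mul ∘ₗ TensorProduct.map F₁.subtype z₁)
            (TensorProduct.lift S2.mul ∘ₗ TensorProduct.map F₂.subtype z₂) ∘ₗ
          (TensorProduct.tensorTensorTensorComm k F₁ F₂ B B).toLinearMap ∘ₗ
          LinearMap.lTensor (F₁ ⊗[k] F₂) SB.Δ) :
    -- (1) σ is a coalgebra morphism into A₁ ⊗_B A₂ which is a section of π
    ((∀ b : B, σ b ∈ pb) ∧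
     (∀ b : B, tcomul k S1 S2 (σ b) = TensorProduct.map σ σ (SB.Δ b)) ∧
     (∀ b : B, tcounit k S1 S2 (σ b) = SB.ε b) ∧
     (∀ b : B, pbFst k S2 π₁ (σ b) = b)) ∧
    -- (2) F(A₁ ⊗_B A₂) = F(A₁) ⊗ F(A₂) as subspaces of A₁ ⊗ A₂
    (sSup {D : Submodule k (A₁ ⊗[k] A₂) | IsSubcoalg k (tcomul k S1 S2) D ∧
        ∀ t ∈ D, pbFst k S2 π₁ t = tcounit k S1 S2 t • SB.one ∧
                 pbSnd k S1 π₂ t = tcounit k S1 S2 t • SB.one}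
      = LinearMap.range (TensorProduct.map F₁.subtype F₂.subtype)) ∧
    -- (3) Θ is a bijective coalgebra morphism onto A₁ ⊗_B A₂
    (Function.Injective Θ ∧ LinearMap.range Θ = pb ∧
     ∃ (ΔF₁ : F₁ →ₗ[k] F₁ ⊗[k] F₁) (ΔF₂ : F₂ →ₗ[k] F₂ ⊗[k] F₂),
       (∀ x : F₁, TensorProduct.map F₁.subtype F₁.subtype (ΔF₁ x) = S1.Δ (x : A₁)) ∧
       (∀ y : F₂, TensorProduct.map F₂.subtype F₂.subtype (ΔF₂ y) = S2.Δ (y : A₂)) ∧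
       (∀ (x : F₁) (y : F₂) (b : B),
          tcomul k S1 S2 (Θ ((x ⊗ₜ[k] y) ⊗ₜ[k] b))
            = TensorProduct.map Θ Θ
                ((TensorProduct.tensorTensorTensorComm k
                    (F₁ ⊗[k] F₂) (F₁ ⊗[k] F₂) B B)
                  (((TensorProduct.tensorTensorTensorComm k F₁ F₁ F₂ F₂)
                      (ΔF₁ x ⊗ₜ[k] ΔF₂ y)) ⊗ₜ[k] SB.Δ b))) ∧
       (∀ (x : F₁) (y : F₂) (b : B),
          tcounit k S1 S2 (Θ ((x ⊗ₜ[k] y) ⊗ₜ[k] b))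
            = (S1.ε (x : A₁) * S2.ε (y : A₂)) * SB.ε b)) := by
  subst hF₁ hF₂ hpb hσ hΘ
  have hF₁ := isSubcoalg_Fsub S1 SB.one π₁
  have hF₂ := isSubcoalg_Fsub S2 SB.one π₂
  refine ⟨⟨fun b => range_sigma_le_pullbackSub hz₁ hz₂ hsec₁ hsec₂ ⟨b, rfl⟩,
      (preservesComul_sigma hz₁ hz₂).apply, LinearMap.congr_fun (tcounit_comp_sigma hz₁ hz₂),
      LinearMap.congr_fun (pbFst_comp_sigma hz₂ hsec₁)⟩,
    sSup_fiber_tensor_eq_range S1 S2 SB.one π₁ π₂,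
    factorization_injective hπ₁ hz₁ hsec₁ hπ₂ hz₂ hsec₂,
    range_factorization hπ₁ hz₁ hsec₁ hπ₂ hz₂ hsec₂,
    hF₁.comul, hF₂.comul, hF₁.map_subtype_comul, hF₂.map_subtype_comul,
    fun x y b => (preservesComul_factorization hF₁ hF₂ hz₁ hz₂).apply ((x ⊗ₜ y) ⊗ₜ b),
    fun x y b => (LinearMap.congr_fun (tcounit_comp_factorization hz₁ hz₂) ((x ⊗ₜ y) ⊗ₜ b)).trans
      (by simp)⟩

open FormalLoops in
/-- properties of the pullback `A₁ ⊗_B A₂`. -/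
theorem pullback_section_and_factorization
    (k : Type*) [Field k] [CharZero k]
    {A₁ A₂ B : Type*} [AddCommGroup A₁] [Module k A₁] [AddCommGroup A₂] [Module k A₂]
    [AddCommGroup B] [Module k B]
    (S1 : DivBialg k A₁) (S2 : DivBialg k A₂) (SB : DivBialg k B)
    (π₁ : A₁ →ₗ[k] B) (π₂ : A₂ →ₗ[k] B) (z₁ : B →ₗ[k] A₁) (z₂ : B →ₗ[k] A₂)
    (hπ₁ : DivBialgHom k S1 SB π₁) (hπ₂ : DivBialgHom k S2 SB π₂)
    (hz₁ : DivBialgHom k SB S1 z₁) (hz₂ : DivBialgHom k SB S2 z₂)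
    (hsec₁ : π₁ ∘ₗ z₁ = LinearMap.id) (hsec₂ : π₂ ∘ₗ z₂ = LinearMap.id)
    -- abbreviations
    (F₁ : Submodule k A₁) (hF₁ : F₁ = Fsub k S1 SB.one π₁)
    (F₂ : Submodule k A₂) (hF₂ : F₂ = Fsub k S2 SB.one π₂)
    (pb : Submodule k (A₁ ⊗[k] A₂)) (hpb : pb = pullbackSub k S1 S2 π₁ π₂)
    -- the section σ : B → A₁ ⊗ A₂, b ↦ Σ z₁(b₍₁₎) ⊗ z₂(b₍₂₎)
    (σ : B →ₗ[k] A₁ ⊗[k] A₂) (hσ : σ = TensorProduct.map z₁ z₂ ∘ₗ SB.Δ)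
    -- the map Θ : (F₁ ⊗ F₂) ⊗ B → A₁ ⊗ A₂, (x ⊗ y) ⊗ b ↦ Σ x·z₁(b₍₁₎) ⊗ y·z₂(b₍₂₎)
    (Θ : (F₁ ⊗[k] F₂) ⊗[k] B →ₗ[k] A₁ ⊗[k] A₂)
    (hΘ : Θ = TensorProduct.map
            (TensorProduct.lift S1.mul ∘ₗ TensorProduct.map F₁.subtype z₁)
            (TensorProduct.lift S2.mul ∘ₗ TensorProduct.map F₂.subtype z₂) ∘ₗ
          (TensorProduct.tensorTensorTensorComm k F₁ F₂ B B).toLinearMap ∘ₗ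
          LinearMap.lTensor (F₁ ⊗[k] F₂) SB.Δ) :
    -- (1) σ is a coalgebra morphism into A₁ ⊗_B A₂ which is a section of π
    ((∀ b : B, σ b ∈ pb) ∧
     (∀ b : B, tcomul k S1 S2 (σ b) = TensorProduct.map σ σ (SB.Δ b)) ∧
     (∀ b : B, tcounit k S1 S2 (σ b) = SB.ε b) ∧
     (∀ b : B, pbFst k S2 π₁ (σ b) = b)) ∧
    -- (2) F(A₁ ⊗_B A₂) = F(A₁) ⊗ F(A₂) as subspaces of A₁ ⊗ A₂
    (sSup {D : Submodule k (A₁ ⊗[k] A₂) | IsSubcoalg k (tcomul k S1 S2) D ∧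
        ∀ t ∈ D, pbFst k S2 π₁ t = tcounit k S1 S2 t • SB.one ∧
                 pbSnd k S1 π₂ t = tcounit k S1 S2 t • SB.one}
      = LinearMap.range (TensorProduct.map F₁.subtype F₂.subtype)) ∧
    -- (3) Θ is a bijective coalgebra morphism onto A₁ ⊗_B A₂
    (Function.Injective Θ ∧ LinearMap.range Θ = pb ∧
     ∃ (ΔF₁ : F₁ →ₗ[k] F₁ ⊗[k] F₁) (ΔF₂ : F₂ →ₗ[k] F₂ ⊗[k] F₂),
       (∀ x : F₁, TensorProduct.map F₁.subtype F₁.subtype (ΔF₁ x) = S1.Δ (x : A₁)) ∧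
       (∀ y : F₂, TensorProduct.map F₂.subtype F₂.subtype (ΔF₂ y) = S2.Δ (y : A₂)) ∧
       (∀ (x : F₁) (y : F₂) (b : B),
          tcomul k S1 S2 (Θ ((x ⊗ₜ[k] y) ⊗ₜ[k] b))
            = TensorProduct.map Θ Θ
                ((TensorProduct.tensorTensorTensorComm k
                    (F₁ ⊗[k] F₂) (F₁ ⊗[k] F₂) B B)
                  (((TensorProduct.tensorTensorTensorComm k F₁ F₁ F₂ F₂)
                      (ΔF₁ x ⊗ₜ[k] ΔF₂ y)) ⊗ₜ[k] SB.Δ b))) ∧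
       (∀ (x : F₁) (y : F₂) (b : B),
          tcounit k S1 S2 (Θ ((x ⊗ₜ[k] y) ⊗ₜ[k] b))
            = (S1.ε (x : A₁) * S2.ε (y : A₂)) * SB.ε b)) :=
  pullback_section_and_factorization_general k S1 S2 SB π₁ π₂ z₁ z₂ hπ₁ hπ₂ hz₁ hz₂ hsec₁ hsec₂ F₁
    hF₁ F₂ hF₂ pb hpb σ hσ Θ hΘ
end

section
/- Let k be a field of characteristic zero and m a Lie algebra over k. Then in L₊(m), for all a, b, c, d ∈ m: [ad_{[a,b]}, ad_{[c,d]}] = [ad_{[[a,b],c]}, ad_d] + [ad_c, ad_{[[a,b],d]}]. -/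
namespace LplusDef

variable (k : Type*) [Field k] (m : Type*) [LieRing m] [LieAlgebra k m]

/-- The set of relations defining `L₊(m)` inside the free Lie algebra on (the
underlying type of) `m`: linearity of the generators `ad`, and
`[[ad_a, ad_b], ad_c] + [ad_[a,b], ad_c] - ad_([[a,b],c] + [[a,c],b] + [a,[b,c]])`. -/
def relSet : Set (FreeLieAlgebra k m) :=
  {x | ∃ (α β : k) (a b : m),
      x = FreeLieAlgebra.of k (α • a + β • b)
          - α • FreeLieAlgebra.of k a - β • FreeLieAlgebra.of k b} ∪
  {x | ∃ a b c : m,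
      x = ⁅⁅FreeLieAlgebra.of k a, FreeLieAlgebra.of k b⁆, FreeLieAlgebra.of k c⁆
          + ⁅FreeLieAlgebra.of k ⁅a, b⁆, FreeLieAlgebra.of k c⁆
          - FreeLieAlgebra.of k (⁅⁅a, b⁆, c⁆ + ⁅⁅a, c⁆, b⁆ + ⁅a, ⁅b, c⁆⁆)}

/-- The Lie ideal of the free Lie algebra generated by the relations. -/
noncomputable def relIdeal : LieIdeal k (FreeLieAlgebra k m) :=
  LieSubmodule.lieSpan k (FreeLieAlgebra k m) (relSet k m)

/-- `L₊(m)`: the quotient of the free Lie algebra on `m` by the relations ideal. -/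
abbrev Lplus := FreeLieAlgebra k m ⧸ relIdeal k m

/-- `ad_a`: the image in `L₊(m)` of the generator corresponding to `a : m`. -/
noncomputable def adgen (a : m) : Lplus k m :=
  LieSubmodule.Quotient.mk' (relIdeal k m) (FreeLieAlgebra.of k a)

end LplusDef

/-!
The defining relation of `L₊(m)`, combined with the Jacobi identity in `m`, reads
`[ad_[x,y], ad_z] = 2 ad_[[x,y],z] - [[ad_x, ad_y], ad_z]`.
Expanding the three brackets of the identity with it, what remains is the Jacobi identity once
in `m`, transported by the linearity of `ad`, and once in `L₊(m)`; so `[a,b]` may be replaced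
by any element of `m`.
-/

theorem lie_lie_eq_lie_lie_sub_lie_lie {L : Type*} [LieRing L] (x y z : L) :
    ⁅⁅x, y⁆, z⁆ = ⁅⁅z, y⁆, x⁆ - ⁅⁅z, x⁆, y⁆ := by
  rw [lie_lie, ← lie_skew ⁅z, y⁆ x, ← lie_skew ⁅z, x⁆ y, ← lie_skew z y, ← lie_skew z x, lie_neg,
    lie_neg]
  abel

namespace LplusDef

variable {k : Type*} [Field k] {m : Type*} [LieRing m] [LieAlgebra k m]

theorem mk_eq_zero_of_mem_relSet {x : FreeLieAlgebra k m} (hx : x ∈ relSet k m) :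
    LieSubmodule.Quotient.mk' (relIdeal k m) x = 0 :=
  (LieSubmodule.Quotient.mk_eq_zero _).mpr (LieSubmodule.subset_lieSpan hx)

theorem adgen_smul_add (α β : k) (a b : m) :
    adgen k m (α • a + β • b) = α • adgen k m a + β • adgen k m b := by
  have h := mk_eq_zero_of_mem_relSet (Or.inl ⟨α, β, a, b, rfl⟩)
  rwa [map_sub, map_sub, map_smul, map_smul, sub_sub, sub_eq_zero] at h

theorem adgen_add (a b : m) : adgen k m (a + b) = adgen k m a + adgen k m b := by
  simpa using adgen_smul_add (1 : k) 1 a b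

theorem adgen_sub (a b : m) : adgen k m (a - b) = adgen k m a - adgen k m b := by
  simpa [sub_eq_add_neg] using adgen_smul_add (1 : k) (-1) a b

theorem adgen_relation (a b c : m) :
    ⁅⁅adgen k m a, adgen k m b⁆, adgen k m c⁆ + ⁅adgen k m ⁅a, b⁆, adgen k m c⁆
      = adgen k m (⁅⁅a, b⁆, c⁆ + ⁅⁅a, c⁆, b⁆ + ⁅a, ⁅b, c⁆⁆) := by
  have h := mk_eq_zero_of_mem_relSet (k := k) (Or.inr ⟨a, b, c, rfl⟩)
  rwa [map_sub, map_add, sub_eq_zero, LieModuleHom.map_lie, LieModuleHom.map_lie] at h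

theorem lie_adgen_lie_adgen (a b c : m) :
    ⁅adgen k m ⁅a, b⁆, adgen k m c⁆
      = 2 • adgen k m ⁅⁅a, b⁆, c⁆ - ⁅⁅adgen k m a, adgen k m b⁆, adgen k m c⁆ := by
  have jacobi : ⁅⁅a, c⁆, b⁆ + ⁅a, ⁅b, c⁆⁆ = ⁅⁅a, b⁆, c⁆ := by
    rw [leibniz_lie a b c, ← lie_skew ⁅a, c⁆ b]
    abel
  rw [eq_sub_iff_add_eq', adgen_relation, add_assoc, jacobi, adgen_add, two_nsmul]

theorem lie_adgen_adgen_lie (p c d : m) :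
    ⁅adgen k m p, adgen k m ⁅c, d⁆⁆
      = ⁅adgen k m ⁅p, c⁆, adgen k m d⁆ + ⁅adgen k m c, adgen k m ⁅p, d⁆⁆ := by
  rw [← lie_skew (adgen k m p), ← lie_skew (adgen k m c) (adgen k m ⁅p, d⁆),
    lie_adgen_lie_adgen c d p, lie_adgen_lie_adgen p c d, lie_adgen_lie_adgen p d c,
    lie_lie_eq_lie_lie_sub_lie_lie c d p, adgen_sub, lie_lie_eq_lie_lie_sub_lie_lie (adgen k m c)]
  abel

end LplusDef

open LplusDef in
theorem adgen_bracket_identity_general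
    (k : Type*) [Field k]
    (m : Type*) [LieRing m] [LieAlgebra k m] :
    ∀ a b c d : m,
      ⁅adgen k m ⁅a, b⁆, adgen k m ⁅c, d⁆⁆
        = ⁅adgen k m ⁅⁅a, b⁆, c⁆, adgen k m d⁆
          + ⁅adgen k m c, adgen k m ⁅⁅a, b⁆, d⁆⁆ :=
  fun a b c d => lie_adgen_adgen_lie ⁅a, b⁆ c d

open LplusDef in
/-- in `L₊(m)`,
`[ad_[a,b], ad_[c,d]] = [ad_[[a,b],c], ad_d] + [ad_c, ad_[[a,b],d]]`. -/
theorem adgen_bracket_identity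
    (k : Type*) [Field k] [CharZero k]
    (m : Type*) [LieRing m] [LieAlgebra k m] :
    ∀ a b c d : m,
      ⁅adgen k m ⁅a, b⁆, adgen k m ⁅c, d⁆⁆
        = ⁅adgen k m ⁅⁅a, b⁆, c⁆, adgen k m d⁆
          + ⁅adgen k m c, adgen k m ⁅⁅a, b⁆, d⁆⁆ :=
  adgen_bracket_identity_general k m
end
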